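/- Let 0 < d < 1/2, a > 0, h > 0, and define g : ℝ → ℝ periodic with period 2h by g = a on [0, dh), g = −a on [h, h + dh), and g = 0 elsewhere in [0, 2h). Let t = h/2. Then the function y ↦ (1/t)∫₀ᵗ g(y+s) ds on [0, 2h) attains the value 2ad on a set of Lebesgue measure at least 2h(1/4 − d/2) − 2dh, attains the value −2ad on a set of the same lower-bound measure, equals 0 on a set of measure at least 2h(1/2 − d) − 2dh, and is everywhere bounded in absolute value by 2ad. -/

import Mathlib

open MeasureTheory Set

/-! The window `[y, y + h/2]` is shorter than the gap `h - dh` between consecutive pulses of `g`,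
so on explicit subintervals of `[0, 2h)` it contains exactly one whole pulse of height `a`, one
of height `-a`, or no pulse at all, which gives the three values. For the bound, `|g|` has period
`h`, hence `|∫_y^{y+h/2} g| ≤ ∫_y^{y+h} |g| = ∫_0^h |g| = a d h`. -/

theorem intervalIntegral_eq_of_eqOn_Ioo {g : ℝ → ℝ} {u v c : ℝ} (huv : u ≤ v)
    (hg : EqOn g (fun _ => c) (Ioo u v)) : ∫ x in u..v, g x = (v - u) * c := by
  rw [intervalIntegral.integral_of_le huv, integral_Ioc_eq_integral_Ioo,
    setIntegral_congr_fun measurableSet_Ioo hg, setIntegral_const, Real.volume_real_Ioo_of_le huv,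
    smul_eq_mul]

theorem intervalIntegrable_of_eqOn_Ioo {g : ℝ → ℝ} {u v c : ℝ} (huv : u ≤ v)
    (hg : EqOn g (fun _ => c) (Ioo u v)) : IntervalIntegrable g volume u v := by
  rw [intervalIntegrable_iff_integrableOn_Ioo_of_le huv]
  exact (integrableOn_const measure_Ioo_lt_top.ne).congr_fun hg.symm measurableSet_Ioo

theorem intervalIntegral_eq_of_eqOn_zero_const_zero {g : ℝ → ℝ} {u m₁ m₂ v c : ℝ}
    (h₁ : u ≤ m₁) (h₂ : m₁ ≤ m₂) (h₃ : m₂ ≤ v)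
    (hz₁ : EqOn g (fun _ => 0) (Ioo u m₁)) (hc : EqOn g (fun _ => c) (Ioo m₁ m₂))
    (hz₂ : EqOn g (fun _ => 0) (Ioo m₂ v)) :
    ∫ x in u..v, g x = (m₂ - m₁) * c := by
  have i₁ := intervalIntegrable_of_eqOn_Ioo h₁ hz₁
  have i₂ := intervalIntegrable_of_eqOn_Ioo h₂ hc
  have i₃ := intervalIntegrable_of_eqOn_Ioo h₃ hz₂
  rw [← intervalIntegral.integral_add_adjacent_intervals (i₁.trans i₂) i₃,
    ← intervalIntegral.integral_add_adjacent_intervals i₁ i₂,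
    intervalIntegral_eq_of_eqOn_Ioo h₁ hz₁, intervalIntegral_eq_of_eqOn_Ioo h₂ hc,
    intervalIntegral_eq_of_eqOn_Ioo h₃ hz₂]
  ring

theorem Function.Periodic.eqOn_const_Ico_add {g : ℝ → ℝ} {c u v b : ℝ}
    (hg : Function.Periodic g c) (hb : EqOn g (fun _ => b) (Ico u v)) :
    EqOn g (fun _ => b) (Ico (u + c) (v + c)) := fun x hx => by
  rw [← hg.sub_eq x]
  exact hb ⟨by linarith [hx.1], by linarith [hx.2]⟩

theorem ofReal_le_volume_of_Ico_subset {s : Set ℝ} {u v r : ℝ} (hr : r ≤ v - u)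
    (hs : Ico u v ⊆ s) : ENNReal.ofReal r ≤ volume s :=
  calc ENNReal.ofReal r ≤ ENNReal.ofReal (v - u) := ENNReal.ofReal_le_ofReal hr
    _ = volume (Ico u v) := Real.volume_Ico.symm
    _ ≤ volume s := measure_mono hs

theorem ofReal_le_volume_of_Ico_union_subset {s : Set ℝ} {u v u' v' r : ℝ} (huv : u ≤ v)
    (hvu' : v ≤ u') (hu'v' : u' ≤ v') (hr : r ≤ (v - u) + (v' - u'))
    (hs : Ico u v ∪ Ico u' v' ⊆ s) : ENNReal.ofReal r ≤ volume s :=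
  calc ENNReal.ofReal r ≤ ENNReal.ofReal (v - u) + ENNReal.ofReal (v' - u') := by
        rw [← ENNReal.ofReal_add (sub_nonneg.2 huv) (sub_nonneg.2 hu'v')]
        exact ENNReal.ofReal_le_ofReal hr
    _ = volume (Ico u v ∪ Ico u' v') := by
        rw [measure_union (Ico_disjoint_Ico_same.mono_right (Ico_subset_Ico_left hvu'))
          measurableSet_Ico, Real.volume_Ico, Real.volume_Ico]
    _ ≤ volume s := measure_mono hs

/-- The Birkhoff average `A(g, t, y)` of `g` along the translation flow. -/
noncomputable def timeAverage (g : ℝ → ℝ) (t y : ℝ) : ℝ :=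
  (1 / t) * ∫ s in (0:ℝ)..t, g (y + s)

theorem timeAverage_eq (g : ℝ → ℝ) (t y : ℝ) :
    timeAverage g t y = (1 / t) * ∫ x in y..y + t, g x := by
  rw [timeAverage, intervalIntegral.integral_comp_add_left, add_zero]

def IsRectangleWave (d a h : ℝ) (g : ℝ → ℝ) : Prop :=
  Function.Periodic g (2 * h) ∧ ∀ s ∈ Ico (0:ℝ) (2 * h),
    g s = if s < d * h then a else if h ≤ s ∧ s < h + d * h then -a else 0

namespace IsRectangleWave

variable {d a h : ℝ} {g : ℝ → ℝ}

theorem eqOn_pos (hg : IsRectangleWave d a h g) (hdh0 : 0 ≤ d * h) (hdh : d * h ≤ h) :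
    EqOn g (fun _ => a) (Ico 0 (d * h)) := fun x hx => by
  rw [hg.2 x ⟨hx.1, by linarith [hx.2]⟩, if_pos hx.2]

theorem eqOn_neg (hg : IsRectangleWave d a h g) (hdh0 : 0 ≤ d * h) (hdh : d * h ≤ h) :
    EqOn g (fun _ => -a) (Ico h (h + d * h)) := fun x hx => by
  rw [hg.2 x ⟨by linarith [hx.1], by linarith [hx.2]⟩, if_neg (by linarith [hx.1]),
    if_pos ⟨hx.1, hx.2⟩]

theorem eqOn_zero_left (hg : IsRectangleWave d a h g) (hdh0 : 0 ≤ d * h) (hdh : d * h ≤ h) :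
    EqOn g (fun _ => 0) (Ico (d * h) h) := fun x hx => by
  rw [hg.2 x ⟨by linarith [hx.1], by linarith [hx.2]⟩, if_neg (not_lt.2 hx.1),
    if_neg fun h' => (not_le.2 hx.2) h'.1]

theorem eqOn_zero_right (hg : IsRectangleWave d a h g) (hdh0 : 0 ≤ d * h) (hdh : d * h ≤ h) :
    EqOn g (fun _ => 0) (Ico (h + d * h) (2 * h)) := fun x hx => by
  rw [hg.2 x ⟨by linarith [hx.1], hx.2⟩, if_neg (by linarith [hx.1]),
    if_neg fun h' => (not_lt.2 hx.1) h'.2]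

theorem abs_periodic (hg : IsRectangleWave d a h g) (hh : 0 < h) (hdh : d * h ≤ h) :
    Function.Periodic (fun x => |g x|) h := by
  have hper : Function.Periodic (fun x => (g x, g (x + h))) (2 * h) := fun x => by
    simp only [hg.1 x, add_right_comm x (2 * h) h, hg.1 (x + h)]
  intro x
  obtain ⟨z, hz, hxz⟩ := hper.exists_mem_Ico₀ (by linarith) x
  simp only [Prod.mk.injEq] at hxz
  simp only [hxz.1, hxz.2]
  rcases lt_or_ge z h with hzh | hzh
  · rw [hg.2 z hz, hg.2 (z + h) ⟨by linarith [hz.1], by linarith⟩]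
    split_ifs <;> grind
  · rw [← hg.1.sub_eq (z + h), hg.2 z hz,
      hg.2 (z + h - 2 * h) ⟨by linarith, by linarith [hz.2]⟩]
    split_ifs <;> grind

theorem intervalIntegrable_abs (hg : IsRectangleWave d a h g) (hh : 0 < h)
    (hdh0 : 0 ≤ d * h) (hdh : d * h ≤ h) (u v : ℝ) :
    IntervalIntegrable (fun x => |g x|) volume u v := by
  refine (hg.abs_periodic hh hdh).intervalIntegrable₀ hh.ne' ?_ u v
  exact (intervalIntegrable_of_eqOn_Ioo (g := fun x => |g x|) hdh0 fun x hx =>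
      congrArg abs (hg.eqOn_pos hdh0 hdh (Ioo_subset_Ico_self hx))).trans
    (intervalIntegrable_of_eqOn_Ioo (g := fun x => |g x|) (c := 0) hdh fun x hx => by
      simp [hg.eqOn_zero_left hdh0 hdh (Ioo_subset_Ico_self hx)])

theorem integral_abs (hg : IsRectangleWave d a h g) (hdh0 : 0 ≤ d * h) (hdh : d * h ≤ h) :
    ∫ x in (0:ℝ)..h, |g x| = d * h * |a| := by
  rw [intervalIntegral_eq_of_eqOn_zero_const_zero (g := fun x => |g x|) le_rfl hdh0 hdh (by simp)
    (fun x hx => congrArg abs (hg.eqOn_pos hdh0 hdh (Ioo_subset_Ico_self hx)))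
    (fun x hx => by simp [hg.eqOn_zero_left hdh0 hdh (Ioo_subset_Ico_self hx)]), sub_zero]

theorem abs_timeAverage_le (hg : IsRectangleWave d a h g) (hh : 0 < h) (hdh0 : 0 ≤ d * h)
    (hdh : d * h ≤ h) (ha : 0 ≤ a) (y : ℝ) : |timeAverage g (h / 2) y| ≤ 2 * a * d :=
  calc |timeAverage g (h / 2) y| = 1 / (h / 2) * |∫ x in y..y + h / 2, g x| := by
        rw [timeAverage_eq, abs_mul, abs_of_pos (by positivity)]
    _ ≤ 1 / (h / 2) * ∫ x in y..y + h / 2, |g x| := by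
        gcongr; exact intervalIntegral.abs_integral_le_integral_abs (by linarith)
    _ ≤ 1 / (h / 2) * ∫ x in y..y + h, |g x| := by
        gcongr
        exact intervalIntegral.integral_mono_interval le_rfl (by linarith) (by linarith)
          (Filter.Eventually.of_forall fun x => abs_nonneg _)
          (hg.intervalIntegrable_abs hh hdh0 hdh _ _)
    _ = 1 / (h / 2) * ∫ x in (0:ℝ)..0 + h, |g x| := by
        rw [(hg.abs_periodic hh hdh).intervalIntegral_add_eq y 0]
    _ = 2 * a * d := by
        rw [zero_add, hg.integral_abs hdh0 hdh, abs_of_nonneg ha]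
        field_simp

theorem timeAverage_eq_pos (hg : IsRectangleWave d a h g) (hh : 0 < h) (hdh0 : 0 ≤ d * h)
    (hdh : d * h ≤ h) {y : ℝ} (hy : y ∈ Ico (3 * h / 2 + d * h) (2 * h)) :
    timeAverage g (h / 2) y = 2 * a * d := by
  obtain ⟨hy₁, hy₂⟩ := hy
  have hpos := hg.1.eqOn_const_Ico_add (hg.eqOn_pos hdh0 hdh)
  have hzero := hg.1.eqOn_const_Ico_add (hg.eqOn_zero_left hdh0 hdh)
  rw [timeAverage_eq, intervalIntegral_eq_of_eqOn_zero_const_zero (m₁ := 2 * h)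
    (m₂ := 2 * h + d * h) hy₂.le (by linarith) (by linarith)
    ((hg.eqOn_zero_right hdh0 hdh).mono
      (Ioo_subset_Ico_self.trans (Ico_subset_Ico (by linarith) le_rfl)))
    (hpos.mono (Ioo_subset_Ico_self.trans (Ico_subset_Ico (by linarith) (by linarith))))
    (hzero.mono (Ioo_subset_Ico_self.trans (Ico_subset_Ico (by linarith) (by linarith))))]
  field_simp
  ring

theorem timeAverage_eq_neg (hg : IsRectangleWave d a h g) (hh : 0 < h) (hdh0 : 0 ≤ d * h)
    (hdh : d * h ≤ h) {y : ℝ} (hy : y ∈ Ico (h / 2 + d * h) h) :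
    timeAverage g (h / 2) y = -(2 * a * d) := by
  obtain ⟨hy₁, hy₂⟩ := hy
  rw [timeAverage_eq, intervalIntegral_eq_of_eqOn_zero_const_zero (m₁ := h)
    (m₂ := h + d * h) hy₂.le (by linarith) (by linarith)
    ((hg.eqOn_zero_left hdh0 hdh).mono
      (Ioo_subset_Ico_self.trans (Ico_subset_Ico (by linarith) le_rfl)))
    ((hg.eqOn_neg hdh0 hdh).mono Ioo_subset_Ico_self)
    ((hg.eqOn_zero_right hdh0 hdh).mono
      (Ioo_subset_Ico_self.trans (Ico_subset_Ico le_rfl (by linarith))))]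
  field_simp
  ring

theorem timeAverage_eq_zero (hg : IsRectangleWave d a h g) (hh : 0 < h) (hdh0 : 0 ≤ d * h)
    (hdh : d * h ≤ h) {y : ℝ} (hy : y ∈ Ico (d * h) (h / 2) ∪ Ico (h + d * h) (3 * h / 2)) :
    timeAverage g (h / 2) y = 0 := by
  suffices EqOn g (fun _ => 0) (Ioo y (y + h / 2)) by
    rw [timeAverage_eq, intervalIntegral_eq_of_eqOn_Ioo (by linarith) this, mul_zero, mul_zero]
  rcases hy with ⟨hy₁, hy₂⟩ | ⟨hy₁, hy₂⟩
  · exact (hg.eqOn_zero_left hdh0 hdh).mono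
      (Ioo_subset_Ico_self.trans (Ico_subset_Ico hy₁ (by linarith)))
  · exact (hg.eqOn_zero_right hdh0 hdh).mono
      (Ioo_subset_Ico_self.trans (Ico_subset_Ico hy₁ (by linarith)))

end IsRectangleWave

/-- Distribution of the Birkhoff averages of the rectangle function at time a quarter
period: the average attains `±2ad` each on sets of measure close to a quarter of the
period, vanishes on a set of measure close to half the period, and is bounded by `2ad`. -/
theorem stmt_7 (d a h : ℝ) (hd0 : 0 < d) (hd : d < 1/2) (ha : 0 < a) (hh : 0 < h)
    (g : ℝ → ℝ)
    (hper : Function.Periodic g (2 * h))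
    (hgdef : ∀ s ∈ Set.Ico (0:ℝ) (2 * h),
      g s = if s < d * h then a else if h ≤ s ∧ s < h + d * h then -a else 0) :
    (volume {y ∈ Set.Ico (0:ℝ) (2 * h) |
        (1/(h/2)) * ∫ s in (0:ℝ)..(h/2), g (y + s) = 2 * a * d} ≥
      ENNReal.ofReal (2 * h * (1/4 - d/2) - 2 * d * h)) ∧
    (volume {y ∈ Set.Ico (0:ℝ) (2 * h) |
        (1/(h/2)) * ∫ s in (0:ℝ)..(h/2), g (y + s) = -(2 * a * d)} ≥
      ENNReal.ofReal (2 * h * (1/4 - d/2) - 2 * d * h)) ∧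
    (volume {y ∈ Set.Ico (0:ℝ) (2 * h) |
        (1/(h/2)) * ∫ s in (0:ℝ)..(h/2), g (y + s) = 0} ≥
      ENNReal.ofReal (2 * h * (1/2 - d) - 2 * d * h)) ∧
    ∀ y : ℝ, |(1/(h/2)) * ∫ s in (0:ℝ)..(h/2), g (y + s)| ≤ 2 * a * d := by
  have hg : IsRectangleWave d a h g := ⟨hper, hgdef⟩
  have hdh0 : 0 ≤ d * h := by positivity
  have hdh : d * h < h / 2 := by nlinarith
  refine ⟨?_, ?_, ?_, hg.abs_timeAverage_le hh hdh0 (by linarith) ha.le⟩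
  · refine ofReal_le_volume_of_Ico_subset (u := 3 * h / 2 + d * h) (v := 2 * h) (by linarith)
      fun y hy => ⟨?_, ?_⟩
    · exact ⟨by linarith [hy.1], hy.2⟩
    · exact hg.timeAverage_eq_pos hh hdh0 (by linarith) hy
  · refine ofReal_le_volume_of_Ico_subset (u := h / 2 + d * h) (v := h) (by linarith)
      fun y hy => ⟨?_, ?_⟩
    · exact ⟨by linarith [hy.1], by linarith [hy.2]⟩
    · exact hg.timeAverage_eq_neg hh hdh0 (by linarith) hy
  · refine ofReal_le_volume_of_Ico_union_subset hdh.le (by linarith) (by linarith) (by linarith)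
      fun y hy => ⟨?_, hg.timeAverage_eq_zero hh hdh0 (by linarith) hy⟩
    rcases hy with ⟨hy₁, hy₂⟩ | ⟨hy₁, hy₂⟩ <;> constructor <;> linarith
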